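/- Let t > 0 and let A : ℕ → ℂ be any sequence. Then the series ∑_{n=1}^∞ √(1 + n²) · |A_n|² · |H_n(t)|² converges if and only if the series ∑_{n=1}^∞ |A_n|² · 4^n · n! · (n−1)! / t^{2n} converges. -/

import Mathlib

open Real Filter

/-- Bessel function of the first kind of natural order `n`. -/
noncomputable def besselJ (n : ℕ) (t : ℝ) : ℝ :=
  ∑' p : ℕ, ((-1 : ℝ) ^ p / ((p.factorial : ℝ) * ((n + p).factorial : ℝ))) * (t / 2) ^ (n + 2 * p)

/-- The digamma value `ψ(m+1) = -γ + ∑_{i=1}^m 1/i`. -/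
noncomputable def psiNat (m : ℕ) : ℝ :=
  -Real.eulerMascheroniConstant + ∑ i ∈ Finset.range m, (1 : ℝ) / (i + 1)

/-- Bessel function of the second kind of natural order `n`. -/
noncomputable def besselY (n : ℕ) (t : ℝ) : ℝ :=
  (2 / π) * Real.log (t / 2) * besselJ n t
    - (1 / π) * ∑ m ∈ Finset.range n,
        (((n - m - 1).factorial : ℝ) / (m.factorial : ℝ)) * (t / 2) ^ ((2 * m : ℤ) - n)
    - (1 / π) * ∑' m : ℕ,
        ((-1 : ℝ) ^ m * (psiNat m + psiNat (m + n)) /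
          ((m.factorial : ℝ) * ((m + n).factorial : ℝ))) * (t / 2) ^ (2 * m + n)

/-- Hankel function of the first kind of natural order `n`. -/
noncomputable def besselH (n : ℕ) (t : ℝ) : ℂ :=
  (besselJ n t : ℂ) + Complex.I * (besselY n t : ℂ)

private lemma fact_mul_fact_le (a b : ℕ) :
    ((a.factorial : ℝ) * b.factorial) ≤ ((a + b).factorial : ℝ) := by
  exact_mod_cast Nat.le_of_dvd (a + b).factorial_pos
    (Nat.factorial_mul_factorial_dvd_factorial_add a b)

private lemma tsum_pow_div_factorial_le {x : ℝ} (hx : 0 ≤ x) :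
    ∑' m : ℕ, x ^ m / (m.factorial : ℝ) ≤ Real.exp x :=
  Real.tsum_le_of_sum_range_le (fun n => by positivity)
    (Real.sum_le_exp_of_nonneg hx)

private lemma psiNat_abs_le (m : ℕ) :
    |psiNat m| ≤ |Real.eulerMascheroniConstant| + m := by
  unfold psiNat
  refine (abs_add_le _ _).trans ?_
  rw [abs_neg]
  gcongr
  refine (Finset.abs_sum_le_sum_abs _ _).trans ?_
  calc ∑ i ∈ Finset.range m, |(1:ℝ)/(i+1)| ≤ ∑ i ∈ Finset.range m, 1 := by
        refine Finset.sum_le_sum fun i _ => ?_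
        rw [abs_of_nonneg (by positivity)]
        rw [div_le_one (by positivity)]
        linarith [Nat.cast_nonneg (α := ℝ) i]
    _ = m := by simp

private lemma besselJ_abs_le (t : ℝ) (ht : 0 < t) (n : ℕ) :
    |besselJ n t| ≤ (t/2) ^ n / (n.factorial : ℝ) * Real.exp (4 * (t/2) ^ 2) := by
  set u := t / 2 with hu
  have hu0 : 0 < u := by positivity
  have hsum : Summable (fun p : ℕ => (4 * u ^ 2) ^ p / (p.factorial : ℝ)) :=
    Real.summable_pow_div_factorial _
  have hg : HasSum (fun p : ℕ => u ^ n / (n.factorial : ℝ) * ((4 * u ^ 2) ^ p / p.factorial))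
      (u ^ n / n.factorial * ∑' p : ℕ, (4 * u ^ 2) ^ p / (p.factorial : ℝ)) :=
    hsum.hasSum.mul_left _
  have hb : ∀ p : ℕ, ‖((-1 : ℝ) ^ p / ((p.factorial : ℝ) * ((n + p).factorial : ℝ)))
        * u ^ (n + 2 * p)‖
      ≤ u ^ n / (n.factorial : ℝ) * ((4 * u ^ 2) ^ p / p.factorial) := by
    intro p
    have habs : ‖((-1 : ℝ) ^ p / ((p.factorial : ℝ) * ((n + p).factorial : ℝ)))
        * u ^ (n + 2 * p)‖ = u ^ (n + 2 * p) / ((p.factorial : ℝ) * ((n + p).factorial : ℝ)) := by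
      rw [Real.norm_eq_abs, abs_mul, abs_div, abs_pow, abs_neg, abs_one, one_pow,
        abs_of_nonneg (by positivity : (0:ℝ) ≤ (p.factorial : ℝ) * ((n + p).factorial : ℝ)),
        abs_of_nonneg (by positivity : (0:ℝ) ≤ u ^ (n + 2 * p))]
      ring
    rw [habs, pow_add, pow_mul]
    calc u ^ n * (u ^ 2) ^ p / ((p.factorial : ℝ) * ((n + p).factorial : ℝ))
        ≤ u ^ n * (4 * u ^ 2) ^ p / ((n.factorial : ℝ) * (p.factorial : ℝ)) := by
          apply div_le_div₀ (by positivity)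
          · exact mul_le_mul_of_nonneg_left
              (pow_le_pow_left₀ (sq_nonneg u) (by nlinarith) p) (by positivity)
          · positivity
          · rw [mul_comm]
            exact mul_le_mul_of_nonneg_left
              (by exact_mod_cast Nat.factorial_le (Nat.le_add_right n p)) (by positivity)
      _ = u ^ n / (n.factorial : ℝ) * ((4 * u ^ 2) ^ p / p.factorial) := by ring
  have key := tsum_of_norm_bounded hg hb
  have : |besselJ n t| ≤ u ^ n / n.factorial * ∑' p : ℕ, (4 * u ^ 2) ^ p / (p.factorial : ℝ) := by
    rw [besselJ, ← hu, ← Real.norm_eq_abs]; exact key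
  refine this.trans ?_
  exact mul_le_mul_of_nonneg_left (tsum_pow_div_factorial_le (by positivity)) (by positivity)

private lemma besselYtail_abs_le (t : ℝ) (ht : 0 < t) (n : ℕ) :
    |∑' m : ℕ, ((-1 : ℝ) ^ m * (psiNat m + psiNat (m + n)) /
          ((m.factorial : ℝ) * ((m + n).factorial : ℝ))) * (t / 2) ^ (2 * m + n)|
      ≤ (2 * |Real.eulerMascheroniConstant| + 2) * ((n : ℝ) + 1) * ((t/2) ^ n / n.factorial)
          * Real.exp (4 * (t/2) ^ 2) := by
  set u := t / 2 with hu
  have hu0 : 0 < u := by positivity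
  set C := 2 * |Real.eulerMascheroniConstant| + 2 with hC
  have hC0 : 0 ≤ C := by positivity
  have hsum : Summable (fun m : ℕ => (4 * u ^ 2) ^ m / (m.factorial : ℝ)) :=
    Real.summable_pow_div_factorial _
  have hg : HasSum (fun m : ℕ =>
        C * ((n : ℝ) + 1) * (u ^ n / (n.factorial : ℝ)) * ((4 * u ^ 2) ^ m / m.factorial))
      (C * ((n : ℝ) + 1) * (u ^ n / n.factorial)
        * ∑' m : ℕ, (4 * u ^ 2) ^ m / (m.factorial : ℝ)) :=
    hsum.hasSum.mul_left _
  have hb : ∀ m : ℕ, ‖((-1 : ℝ) ^ m * (psiNat m + psiNat (m + n)) /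
          ((m.factorial : ℝ) * ((m + n).factorial : ℝ))) * u ^ (2 * m + n)‖
      ≤ C * ((n : ℝ) + 1) * (u ^ n / (n.factorial : ℝ)) * ((4 * u ^ 2) ^ m / m.factorial) := by
    intro m
    have hpsi : |psiNat m + psiNat (m + n)| ≤ C * ((n : ℝ) + 1) * ((m : ℝ) + 1) := by
      refine ((abs_add_le _ _).trans (add_le_add (psiNat_abs_le m) (psiNat_abs_le (m + n)))).trans ?_
      push_cast
      rw [hC]
      nlinarith [abs_nonneg Real.eulerMascheroniConstant,
        Nat.cast_nonneg (α := ℝ) m, Nat.cast_nonneg (α := ℝ) n,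
        mul_nonneg (Nat.cast_nonneg (α := ℝ) m) (Nat.cast_nonneg (α := ℝ) n),
        mul_nonneg (abs_nonneg Real.eulerMascheroniConstant) (Nat.cast_nonneg (α := ℝ) n),
        mul_nonneg (abs_nonneg Real.eulerMascheroniConstant) (Nat.cast_nonneg (α := ℝ) m),
        mul_nonneg (mul_nonneg (abs_nonneg Real.eulerMascheroniConstant)
          (Nat.cast_nonneg (α := ℝ) m)) (Nat.cast_nonneg (α := ℝ) n)]
    have hm2 : ((m : ℝ) + 1) ≤ 2 ^ m := by exact_mod_cast Nat.lt_two_pow_self (n := m)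
    have habs : ‖((-1 : ℝ) ^ m * (psiNat m + psiNat (m + n)) /
          ((m.factorial : ℝ) * ((m + n).factorial : ℝ))) * u ^ (2 * m + n)‖
        = |psiNat m + psiNat (m + n)| * (u ^ n * (u ^ 2) ^ m)
            / ((m.factorial : ℝ) * ((m + n).factorial : ℝ)) := by
      rw [Real.norm_eq_abs, abs_mul, abs_div, abs_mul, abs_pow, abs_neg, abs_one, one_pow,
        one_mul, abs_of_nonneg (by positivity : (0:ℝ) ≤ (m.factorial : ℝ) * ((m + n).factorial : ℝ)),
        abs_of_nonneg (by positivity : (0:ℝ) ≤ u ^ (2 * m + n)), pow_add, pow_mul]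
      ring
    rw [habs]
    have key : ((m : ℝ) + 1) * (u ^ 2) ^ m / ((m.factorial : ℝ) * ((m + n).factorial : ℝ))
        ≤ (4 * u ^ 2) ^ m / ((m.factorial : ℝ) * (n.factorial : ℝ)) := by
      apply div_le_div₀ (by positivity) ?_ (by positivity) ?_
      · calc ((m : ℝ) + 1) * (u ^ 2) ^ m ≤ (2 : ℝ) ^ m * (u ^ 2) ^ m :=
              mul_le_mul_of_nonneg_right hm2 (by positivity)
          _ = (2 * u ^ 2) ^ m := (mul_pow _ _ _).symm
          _ ≤ (4 * u ^ 2) ^ m := pow_le_pow_left₀ (by positivity) (by nlinarith) m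
      · exact mul_le_mul_of_nonneg_left
          (by exact_mod_cast Nat.factorial_le (Nat.le_add_left n m)) (by positivity)
    calc |psiNat m + psiNat (m + n)| * (u ^ n * (u ^ 2) ^ m)
            / ((m.factorial : ℝ) * ((m + n).factorial : ℝ))
        ≤ (C * ((n : ℝ) + 1) * ((m : ℝ) + 1)) * (u ^ n * (u ^ 2) ^ m)
            / ((m.factorial : ℝ) * ((m + n).factorial : ℝ)) := by
          gcongr
      _ = (C * ((n : ℝ) + 1)) * u ^ n
            * (((m : ℝ) + 1) * (u ^ 2) ^ m / ((m.factorial : ℝ) * ((m + n).factorial : ℝ))) := by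
          ring
      _ ≤ (C * ((n : ℝ) + 1)) * u ^ n
            * ((4 * u ^ 2) ^ m / ((m.factorial : ℝ) * (n.factorial : ℝ))) :=
          mul_le_mul_of_nonneg_left key (by positivity)
      _ = C * ((n : ℝ) + 1) * (u ^ n / (n.factorial : ℝ)) * ((4 * u ^ 2) ^ m / m.factorial) := by
          ring
  have key := tsum_of_norm_bounded hg hb
  rw [← Real.norm_eq_abs]
  refine key.trans ?_
  exact mul_le_mul_of_nonneg_left (tsum_pow_div_factorial_le (by positivity)) (by positivity)

private lemma S_ge (t : ℝ) (ht : 0 < t) (k : ℕ) (hk : 1 ≤ k) :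
    ((k - 1).factorial : ℝ) / (t/2) ^ k
      ≤ ∑ m ∈ Finset.range k,
          (((k - m - 1).factorial : ℝ) / (m.factorial : ℝ)) * (t/2) ^ ((2 * m : ℤ) - k) := by
  have hu0 : (0:ℝ) < t/2 := by positivity
  have h0 : (0:ℕ) ∈ Finset.range k := Finset.mem_range.mpr hk
  have hterm : (((k - 0 - 1).factorial : ℝ) / ((0:ℕ).factorial : ℝ))
      * (t/2) ^ ((2 * (0:ℕ) : ℤ) - k) = ((k - 1).factorial : ℝ) / (t/2) ^ k := by
    have : ((2 * (0:ℕ) : ℤ) - k) = -(k : ℤ) := by simp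
    rw [this, zpow_neg, zpow_natCast]
    simp [div_eq_mul_inv]
  refine le_trans (le_of_eq hterm.symm)
    (Finset.single_le_sum (f := fun m =>
        (((k - m - 1).factorial : ℝ) / (m.factorial : ℝ)) * (t/2) ^ ((2 * m : ℤ) - k))
      (fun m _ => mul_nonneg (div_nonneg (Nat.cast_nonneg _) (Nat.cast_nonneg _))
        (zpow_pos hu0 _).le) h0)

private lemma S_le (t : ℝ) (ht : 0 < t) (k : ℕ) (hk : 1 ≤ k) :
    ∑ m ∈ Finset.range k,
        (((k - m - 1).factorial : ℝ) / (m.factorial : ℝ)) * (t/2) ^ ((2 * m : ℤ) - k)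
      ≤ ((k - 1).factorial : ℝ) / (t/2) ^ k * Real.exp (4 * (t/2) ^ 2) := by
  set u := t / 2 with hu
  have hu0 : (0:ℝ) < u := by positivity
  calc ∑ m ∈ Finset.range k,
        (((k - m - 1).factorial : ℝ) / (m.factorial : ℝ)) * u ^ ((2 * m : ℤ) - k)
      ≤ ∑ m ∈ Finset.range k,
          ((k - 1).factorial : ℝ) / u ^ k * ((4 * u ^ 2) ^ m / (m.factorial : ℝ)) := by
        refine Finset.sum_le_sum fun m hm => ?_
        have hmk : m < k := Finset.mem_range.mp hm
        have hz : u ^ ((2 * m : ℤ) - k) = (u ^ 2) ^ m / u ^ k := by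
          have e : ((2 * m : ℤ)) = ((2 * m : ℕ) : ℤ) := by push_cast; ring
          rw [zpow_sub₀ (ne_of_gt hu0), e, zpow_natCast, zpow_natCast, pow_mul]
        rw [hz]
        have hfle : (((k - m - 1).factorial : ℝ)) ≤ ((k - 1).factorial : ℝ) := by
          exact_mod_cast Nat.factorial_le (Nat.sub_le_sub_right (Nat.sub_le k m) 1)
        calc (((k - m - 1).factorial : ℝ) / (m.factorial : ℝ)) * ((u ^ 2) ^ m / u ^ k)
            = ((k - m - 1).factorial : ℝ) * (u ^ 2) ^ m / (u ^ k * (m.factorial : ℝ)) := by ring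
          _ ≤ ((k - 1).factorial : ℝ) * (4 * u ^ 2) ^ m / (u ^ k * (m.factorial : ℝ)) := by
              apply div_le_div₀ (by positivity) ?_ (by positivity) le_rfl
              exact mul_le_mul hfle (pow_le_pow_left₀ (by positivity) (by nlinarith) m)
                (by positivity) (by positivity)
          _ = ((k - 1).factorial : ℝ) / u ^ k * ((4 * u ^ 2) ^ m / (m.factorial : ℝ)) := by ring
    _ = ((k - 1).factorial : ℝ) / u ^ k
          * ∑ m ∈ Finset.range k, (4 * u ^ 2) ^ m / (m.factorial : ℝ) := by
        rw [Finset.mul_sum]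
    _ ≤ ((k - 1).factorial : ℝ) / u ^ k * Real.exp (4 * u ^ 2) :=
        mul_le_mul_of_nonneg_left (Real.sum_le_exp_of_nonneg (by positivity) k) (by positivity)

private lemma besselH_abs_sq (k : ℕ) (t : ℝ) :
    ‖besselH k t‖ ^ 2 = besselJ k t ^ 2 + besselY k t ^ 2 := by
  rw [Complex.sq_norm, Complex.normSq_apply]
  simp [besselH]
  ring

private lemma besselY_bounds (t : ℝ) (ht : 0 < t) (k : ℕ) (hk : 1 ≤ k) :
    (1/π) * (((k - 1).factorial : ℝ) / (t/2) ^ k)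
        - (1/π) * (((2 * |Real.eulerMascheroniConstant| + 2) * ((k:ℝ) + 1)
              + 2 * |Real.log (t/2)|) * ((t/2) ^ k / (k.factorial : ℝ))
            * Real.exp (4 * (t/2) ^ 2))
      ≤ |besselY k t|
    ∧ |besselY k t|
      ≤ (1/π) * (((k - 1).factorial : ℝ) / (t/2) ^ k) * Real.exp (4 * (t/2) ^ 2)
        + (1/π) * (((2 * |Real.eulerMascheroniConstant| + 2) * ((k:ℝ) + 1)
              + 2 * |Real.log (t/2)|) * ((t/2) ^ k / (k.factorial : ℝ))
            * Real.exp (4 * (t/2) ^ 2)) := by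
  have hπ : 0 < π := Real.pi_pos
  have hu0 : (0:ℝ) < t/2 := by positivity
  set S := ∑ m ∈ Finset.range k,
      (((k - m - 1).factorial : ℝ) / (m.factorial : ℝ)) * (t/2) ^ ((2 * m : ℤ) - k) with hSdef
  set T := ∑' m : ℕ, ((-1 : ℝ) ^ m * (psiNat m + psiNat (m + k)) /
      ((m.factorial : ℝ) * ((m + k).factorial : ℝ))) * (t/2) ^ (2 * m + k) with hTdef
  set J := besselJ k t with hJdef
  have hYdef : besselY k t = (2/π) * Real.log (t/2) * J - (1/π) * S - (1/π) * T := rfl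
  set D := ((k - 1).factorial : ℝ) / (t/2) ^ k with hDdef
  set P := ((2 * |Real.eulerMascheroniConstant| + 2) * ((k:ℝ) + 1) + 2 * |Real.log (t/2)|)
      * ((t/2) ^ k / (k.factorial : ℝ)) * Real.exp (4 * (t/2) ^ 2) with hPdef
  have hSge : D ≤ S := S_ge t ht k hk
  have hSle : S ≤ D * Real.exp (4 * (t/2) ^ 2) := by
    have := S_le t ht k hk
    rw [← hSdef, ← hDdef] at this
    exact this
  have hD0 : 0 < D := by rw [hDdef]; positivity
  have hS0 : 0 ≤ S := le_trans hD0.le hSge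
  have herr : |besselY k t + (1/π) * S| ≤ (1/π) * P := by
    have heq : besselY k t + (1/π) * S = (2/π) * Real.log (t/2) * J - (1/π) * T := by
      rw [hYdef]; ring
    rw [heq]
    refine (abs_sub _ _).trans ?_
    have h1 : |(2/π) * Real.log (t/2) * J|
        ≤ (2/π) * |Real.log (t/2)| * ((t/2) ^ k / (k.factorial : ℝ)
            * Real.exp (4 * (t/2) ^ 2)) := by
      rw [abs_mul, abs_mul, abs_of_nonneg (by positivity : (0:ℝ) ≤ 2/π)]
      exact mul_le_mul_of_nonneg_left (besselJ_abs_le t ht k) (by positivity)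
    have h2 : |(1/π) * T| ≤ (1/π) * ((2 * |Real.eulerMascheroniConstant| + 2) * ((k:ℝ) + 1)
        * ((t/2) ^ k / (k.factorial : ℝ)) * Real.exp (4 * (t/2) ^ 2)) := by
      rw [abs_mul, abs_of_nonneg (by positivity : (0:ℝ) ≤ 1/π)]
      exact mul_le_mul_of_nonneg_left (besselYtail_abs_le t ht k) (by positivity)
    refine le_trans (add_le_add h1 h2) (le_of_eq ?_)
    rw [hPdef]; ring
  constructor
  · have h3 : |(1/π) * S| - |besselY k t + (1/π) * S| ≤ |(1/π) * S - (besselY k t + (1/π) * S)| :=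
      abs_sub_abs_le_abs_sub _ _
    have h4 : |(1/π) * S - (besselY k t + (1/π) * S)| = |besselY k t| := by
      rw [show (1/π) * S - (besselY k t + (1/π) * S) = -(besselY k t) by ring, abs_neg]
    have h5 : |(1/π) * S| = (1/π) * S := abs_of_nonneg (by positivity)
    have h6 : (1/π) * D ≤ (1/π) * S := mul_le_mul_of_nonneg_left hSge (by positivity)
    rw [h4, h5] at h3
    linarith
  · have h3 : |besselY k t| ≤ |besselY k t + (1/π) * S| + |(1/π) * S| := by
      have := abs_add_le (besselY k t + (1/π) * S) (-((1/π) * S))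
      simpa using this
    have h5 : |(1/π) * S| = (1/π) * S := abs_of_nonneg (by positivity)
    have h6 : (1/π) * S ≤ (1/π) * (D * Real.exp (4 * (t/2) ^ 2)) :=
      mul_le_mul_of_nonneg_left hSle (by positivity)
    rw [h5] at h3
    have : (1/π) * (D * Real.exp (4 * (t/2) ^ 2)) = (1/π) * D * Real.exp (4 * (t/2) ^ 2) := by
      ring
    linarith

set_option maxHeartbeats 1000000 in
/-- Key step of Corollary 3.2: for `t > 0` and any sequence `A : ℕ → ℂ`, the series
`∑_{n=1}^∞ √(1+n²) |A_n|² |H_n(t)|²` converges iff `∑_{n=1}^∞ |A_n|² 4^n n! (n−1)! / t^{2n}`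
converges. -/
theorem h_half_norm_summable_iff (t : ℝ) (ht : 0 < t) (A : ℕ → ℂ) :
    Summable (fun n : ℕ =>
        Real.sqrt (1 + ((n + 1 : ℕ) : ℝ) ^ 2) * ‖A (n + 1)‖ ^ 2
          * ‖besselH (n + 1) t‖ ^ 2)
      ↔ Summable (fun n : ℕ =>
          ‖A (n + 1)‖ ^ 2 * 4 ^ (n + 1) * ((n + 1).factorial : ℝ)
            * (n.factorial : ℝ) / t ^ (2 * (n + 1))) := by
  have hπ : 0 < π := Real.pi_pos
  set u := t / 2 with hu
  have hu0 : 0 < u := by positivity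
  set E := Real.exp (4 * u ^ 2) with hE
  have hE1 : 1 ≤ E := Real.one_le_exp (by positivity)
  set γ' := |Real.eulerMascheroniConstant| with hγ
  have hγ0 : 0 ≤ γ' := abs_nonneg _
  set L := |Real.log u| with hL
  have hL0 : 0 ≤ L := abs_nonneg _
  set F : ℕ → ℝ := fun n : ℕ =>
      Real.sqrt (1 + ((n + 1 : ℕ) : ℝ) ^ 2) * ‖A (n + 1)‖ ^ 2
        * ‖besselH (n + 1) t‖ ^ 2 with hF
  set G : ℕ → ℝ := fun n : ℕ =>
      ‖A (n + 1)‖ ^ 2 * 4 ^ (n + 1) * ((n + 1).factorial : ℝ)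
        * (n.factorial : ℝ) / t ^ (2 * (n + 1)) with hG
  -- the error ratio tends to zero
  have hr : Tendsto (fun n : ℕ => ((2 * γ' + 2) * ((n : ℝ) + 2) + 2 * L) * E * u ^ (2 * (n + 1)) /
      (((n + 1).factorial : ℝ) * (n.factorial : ℝ))) atTop (nhds 0) := by
    have hq : Tendsto (fun n : ℕ =>
        (((2 * γ' + 2) * 2 + 2 * L) * E * u ^ 2) * ((u ^ 2) ^ n / (n.factorial : ℝ)))
        atTop (nhds 0) := by
      have := (FloorSemiring.tendsto_pow_div_factorial_atTop (u ^ 2)).const_mul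
        (((2 * γ' + 2) * 2 + 2 * L) * E * u ^ 2)
      simpa using this
    refine squeeze_zero (fun n => by positivity) (fun n => ?_) hq
    have hF0 : (0:ℝ) < ((n + 1).factorial : ℝ) := by positivity
    have hF1 : (1:ℝ) ≤ ((n + 1).factorial : ℝ) := by
      exact_mod_cast (n + 1).factorial_pos
    have hF2 : ((n : ℝ) + 2) ≤ 2 * ((n + 1).factorial : ℝ) := by
      have h := Nat.self_le_factorial (n + 1)
      have h' : ((n : ℝ) + 1) ≤ ((n + 1).factorial : ℝ) := by exact_mod_cast h
      linarith
    have hAB : ((2 * γ' + 2) * ((n : ℝ) + 2) + 2 * L) / ((n + 1).factorial : ℝ)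
        ≤ (2 * γ' + 2) * 2 + 2 * L := by
      rw [div_le_iff₀ hF0]
      have t1 := mul_le_mul_of_nonneg_left hF2 (by positivity : (0:ℝ) ≤ 2 * γ' + 2)
      have t2 := mul_le_mul_of_nonneg_left hF1 hL0
      nlinarith
    have hupow : u ^ (2 * (n + 1)) = (u ^ 2) ^ n * u ^ 2 := by
      rw [pow_mul, pow_succ]
    calc ((2 * γ' + 2) * ((n : ℝ) + 2) + 2 * L) * E * u ^ (2 * (n + 1)) /
          (((n + 1).factorial : ℝ) * (n.factorial : ℝ))
        = (((2 * γ' + 2) * ((n : ℝ) + 2) + 2 * L) / ((n + 1).factorial : ℝ))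
            * (E * u ^ 2 * ((u ^ 2) ^ n / (n.factorial : ℝ))) := by
          rw [hupow]; ring
      _ ≤ ((2 * γ' + 2) * 2 + 2 * L) * (E * u ^ 2 * ((u ^ 2) ^ n / (n.factorial : ℝ))) :=
          mul_le_mul_of_nonneg_right hAB (by positivity)
      _ = (((2 * γ' + 2) * 2 + 2 * L) * E * u ^ 2) * ((u ^ 2) ^ n / (n.factorial : ℝ)) := by
          ring
  obtain ⟨N, hN⟩ := eventually_atTop.mp (hr.eventually (gt_mem_nhds (by norm_num : (0:ℝ) < 1/2)))
  have key : ∀ n, N ≤ n → (1/(4 * π ^ 2)) * G n ≤ F n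
      ∧ F n ≤ (2 * (1 + ((E + 1)/π) ^ 2)) * G n := by
    intro n hn
    set k := n + 1 with hk
    have hk1 : 1 ≤ k := Nat.le_add_left 1 n
    have hkf : ((k - 1).factorial : ℝ) = (n.factorial : ℝ) := by rw [hk]; simp
    set D := (n.factorial : ℝ) / u ^ k with hD
    have hD0 : 0 < D := by rw [hD]; positivity
    have hrn := hN n hn
    set err := (2 * γ' + 2) * ((k : ℝ) + 1) + 2 * L with hPdef
    set err2 := err * (u ^ k / (k.factorial : ℝ)) * E with herrdef
    have herr_eq : err2 = (((2 * γ' + 2) * ((n : ℝ) + 2) + 2 * L) * E * u ^ (2 * (n + 1)) /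
        (((n + 1).factorial : ℝ) * (n.factorial : ℝ))) * D := by
      rw [herrdef, hPdef, hD, hk]
      have hky : ((n + 1 : ℕ) : ℝ) + 1 = (n : ℝ) + 2 := by push_cast; ring
      rw [hky]
      have h1 : ((n + 1).factorial : ℝ) ≠ 0 := by positivity
      have h2 : (n.factorial : ℝ) ≠ 0 := by positivity
      have h3 : u ^ (n + 1) ≠ 0 := by positivity
      field_simp
      ring
    have herr_le : err2 ≤ (1/2) * D := by
      rw [herr_eq]
      exact mul_le_mul_of_nonneg_right hrn.le hD0.le
    obtain ⟨hYlo, hYhi⟩ := besselY_bounds t ht k hk1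
    rw [← hu, ← hE, ← hγ, ← hL, hkf, ← hD, ← herrdef] at hYlo hYhi
    have hYlo2 : D / (2 * π) ≤ |besselY k t| := by
      have h1 : (1/π) * err2 ≤ (1/π) * ((1/2) * D) :=
        mul_le_mul_of_nonneg_left herr_le (by positivity)
      calc D / (2 * π) = (1/π) * D - (1/π) * ((1/2) * D) := by ring
        _ ≤ (1/π) * D - (1/π) * err2 := by linarith
        _ ≤ |besselY k t| := hYlo
    have hYhi2 : |besselY k t| ≤ ((E + 1)/π) * D := by
      refine hYhi.trans ?_
      have h1 : (1/π) * err2 ≤ (1/π) * ((1/2) * D) :=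
        mul_le_mul_of_nonneg_left herr_le (by positivity)
      have h2 : 0 ≤ (1/π) * D := by positivity
      have h3 : ((E + 1)/π) * D = (1/π) * D * E + (1/π) * D := by ring
      linarith
    have hJb : |besselJ k t| ≤ D := by
      have h0 := besselJ_abs_le t ht k
      rw [← hu, ← hE] at h0
      have hP1 : (1:ℝ) ≤ err := by
        rw [hPdef]
        have h4 : (1:ℝ) ≤ (k : ℝ) + 1 := by
          have := Nat.cast_nonneg (α := ℝ) k
          linarith
        nlinarith
      have h5 : u ^ k / (k.factorial : ℝ) * E ≤ err2 := by
        rw [herrdef]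
        calc u ^ k / (k.factorial : ℝ) * E = 1 * (u ^ k / (k.factorial : ℝ)) * E := by ring
          _ ≤ err * (u ^ k / (k.factorial : ℝ)) * E := by
              apply mul_le_mul_of_nonneg_right _ (by positivity)
              exact mul_le_mul_of_nonneg_right hP1 (by positivity)
      exact h0.trans (h5.trans (herr_le.trans (by linarith)))
    have hH := besselH_abs_sq k t
    have hHlo : (D / (2 * π)) ^ 2 ≤ ‖besselH k t‖ ^ 2 := by
      rw [hH]
      have h1 : (D / (2 * π)) ^ 2 ≤ besselY k t ^ 2 := by
        rw [← sq_abs (besselY k t)]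
        exact pow_le_pow_left₀ (by positivity) hYlo2 2
      nlinarith [sq_nonneg (besselJ k t)]
    have hHhi : ‖besselH k t‖ ^ 2 ≤ (1 + ((E + 1)/π) ^ 2) * D ^ 2 := by
      rw [hH]
      have h1 : besselJ k t ^ 2 ≤ D ^ 2 := by
        rw [← sq_abs (besselJ k t)]
        exact pow_le_pow_left₀ (abs_nonneg _) hJb 2
      have h2 : besselY k t ^ 2 ≤ ((E + 1)/π) ^ 2 * D ^ 2 := by
        rw [← sq_abs (besselY k t), ← mul_pow]
        exact pow_le_pow_left₀ (abs_nonneg _) hYhi2 2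
      nlinarith
    have hk0 : (0:ℝ) ≤ (k : ℝ) := Nat.cast_nonneg k
    have hlo : (k : ℝ) ≤ Real.sqrt (1 + ((k : ℕ) : ℝ) ^ 2) := by
      calc (k : ℝ) = Real.sqrt ((k : ℝ) ^ 2) := (Real.sqrt_sq hk0).symm
        _ ≤ Real.sqrt (1 + ((k : ℕ) : ℝ) ^ 2) := Real.sqrt_le_sqrt (by push_cast; linarith)
    have hhi : Real.sqrt (1 + ((k : ℕ) : ℝ) ^ 2) ≤ 2 * (k : ℝ) := by
      have h1 : (1:ℝ) ≤ (k : ℝ) := by exact_mod_cast hk1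
      calc Real.sqrt (1 + ((k : ℕ) : ℝ) ^ 2) ≤ Real.sqrt ((2 * (k : ℝ)) ^ 2) :=
            Real.sqrt_le_sqrt (by push_cast; nlinarith [Nat.cast_nonneg (α := ℝ) n])
        _ = 2 * (k : ℝ) := Real.sqrt_sq (by positivity)
    have hGeq : G n = ‖A k‖ ^ 2 * (k : ℝ) * D ^ 2 := by
      simp only [hG]
      rw [← hk]
      have hfk : ((k.factorial : ℝ)) = (k : ℝ) * (n.factorial : ℝ) := by
        rw [hk]; exact_mod_cast Nat.factorial_succ n
      have ht2 : t = 2 * u := by rw [hu]; ring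
      rw [hD, hfk, ht2]
      rw [show ((2:ℝ) * u) ^ (2 * k) = 2 ^ (2 * k) * u ^ (2 * k) from mul_pow _ _ _]
      rw [show (4:ℝ) ^ k = 2 ^ (2 * k) from by rw [pow_mul]; norm_num]
      have h1 : (2:ℝ) ^ (2 * k) ≠ 0 := by positivity
      have h2 : u ^ k ≠ 0 := by positivity
      field_simp
      ring
    have hFeq : F n = Real.sqrt (1 + ((k : ℕ) : ℝ) ^ 2) * ‖A k‖ ^ 2
        * ‖besselH k t‖ ^ 2 := by
      simp only [hF]
      rfl
    constructor
    · rw [hGeq, hFeq]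
      have heq : (1/(4 * π ^ 2)) * (‖A k‖ ^ 2 * (k : ℝ) * D ^ 2)
          = (k : ℝ) * ‖A k‖ ^ 2 * (D / (2 * π)) ^ 2 := by
        field_simp
        ring
      rw [heq]
      exact mul_le_mul (mul_le_mul_of_nonneg_right hlo (sq_nonneg _)) hHlo (sq_nonneg _)
        (by positivity)
    · rw [hGeq, hFeq]
      calc Real.sqrt (1 + ((k : ℕ) : ℝ) ^ 2) * ‖A k‖ ^ 2
            * ‖besselH k t‖ ^ 2
          ≤ (2 * (k : ℝ)) * ‖A k‖ ^ 2 * ((1 + ((E + 1)/π) ^ 2) * D ^ 2) :=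
            mul_le_mul (mul_le_mul_of_nonneg_right hhi (sq_nonneg _)) hHhi (sq_nonneg _)
              (by positivity)
        _ = (2 * (1 + ((E + 1)/π) ^ 2)) * (‖A k‖ ^ 2 * (k : ℝ) * D ^ 2) := by ring
  have hF0 : ∀ n, 0 ≤ F n := fun n => by
    simp only [hF]; positivity
  have hG0 : ∀ n, 0 ≤ G n := fun n => by
    simp only [hG]; positivity
  constructor
  · intro h
    refine summable_of_isBigO_nat h ?_
    rw [Asymptotics.isBigO_iff]
    refine ⟨4 * π ^ 2, eventually_atTop.2 ⟨N, fun n hn => ?_⟩⟩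
    obtain ⟨h1, _⟩ := key n hn
    rw [Real.norm_eq_abs, Real.norm_eq_abs, abs_of_nonneg (hG0 n), abs_of_nonneg (hF0 n)]
    have h2 := mul_le_mul_of_nonneg_left h1 (by positivity : (0:ℝ) ≤ 4 * π ^ 2)
    have h3 : (4 * π ^ 2) * ((1/(4 * π ^ 2)) * G n) = G n := by
      field_simp
    linarith
  · intro h
    refine summable_of_isBigO_nat h ?_
    rw [Asymptotics.isBigO_iff]
    refine ⟨2 * (1 + ((E + 1)/π) ^ 2), eventually_atTop.2 ⟨N, fun n hn => ?_⟩⟩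
    obtain ⟨_, h2⟩ := key n hn
    rw [Real.norm_eq_abs, Real.norm_eq_abs, abs_of_nonneg (hG0 n), abs_of_nonneg (hF0 n)]
    exact h2
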